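/- arXiv:2603.08322 — 3 statements merged into one kernel-verified Lean document; each statement's English description precedes it below -/
import Mathlib

section
/- For every n × n Latin square L, the sum over all pairs of rows r₁ < r₂ of the distance d(r₁, r₂) equals n²(n²-1)/6. -/
/-! Summing `d` over all ordered pairs of rows and exchanging the order of summation, each
symbol `s` contributes `∑_{r,r'} |pos(r,s) - pos(r',s)|`. As `s` occurs exactly once in each
column, `r ↦ pos(r,s)` is a permutation, so every symbol contributes
`∑_{i,j<n} |i - j| = (n³ - n)/3`. Since `d` is symmetric and vanishes on the diagonal, the sum
over `r₁ < r₂` is half the ordered sum, `n (n³ - n) / 6`. -/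

open Finset

structure LatinSquare (n : ℕ) where
  toFun : Fin n → Fin n → Fin n
  row_bij : ∀ r, Function.Bijective (toFun r)
  col_bij : ∀ c, Function.Bijective (fun r => toFun r c)

namespace LatinSquare

variable {n : ℕ}

/-- The column containing symbol `s` in row `r`. -/
noncomputable def pos (L : LatinSquare n) (r s : Fin n) : Fin n :=
  (Equiv.ofBijective _ (L.row_bij r)).symm s

/-- The distance between two rows. -/
noncomputable def dist (L : LatinSquare n) (r₁ r₂ : Fin n) : ℤ :=
  ∑ s : Fin n, |((L.pos r₁ s : ℕ) : ℤ) - ((L.pos r₂ s : ℕ) : ℤ)|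

/-- Three times the imbalance, `3·I(L)`. -/
noncomputable def imbalance3 (L : LatinSquare n) : ℤ :=
  ∑ p ∈ Finset.univ.filter (fun p : Fin n × Fin n => p.1 < p.2),
    |3 * L.dist p.1 p.2 - (n : ℤ) * ((n : ℤ) + 1)|

end LatinSquare

theorem Finset.sum_prod_eq_two_nsmul_sum_lt {α M : Type*} [Fintype α] [LinearOrder α]
    [AddCommMonoid M] (f : α → α → M) (hsymm : ∀ a b, f a b = f b a) (hdiag : ∀ a, f a a = 0) :
    ∑ p : α × α, f p.1 p.2 = 2 • ∑ p ∈ univ.filter (fun p : α × α => p.1 < p.2), f p.1 p.2 := by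
  have hsplit : ∀ a b, f a b = (if a < b then f a b else 0) + (if b < a then f b a else 0) := by
    intro a b
    rcases lt_trichotomy a b with h | rfl | h
    · simp [h, h.not_gt]
    · simp [hdiag]
    · simp [h, h.not_gt, hsymm a b]
  have hswap : ∑ p : α × α, (if p.2 < p.1 then f p.2 p.1 else 0)
      = ∑ p : α × α, (if p.1 < p.2 then f p.1 p.2 else 0) :=
    Fintype.sum_equiv (Equiv.prodComm α α) _ _ fun _ => rfl
  calc ∑ p : α × α, f p.1 p.2
      = ∑ p : α × α, ((if p.1 < p.2 then f p.1 p.2 else 0)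
          + (if p.2 < p.1 then f p.2 p.1 else 0)) := sum_congr rfl fun p _ => hsplit p.1 p.2
    _ = 2 • ∑ p ∈ univ.filter (fun p : α × α => p.1 < p.2), f p.1 p.2 := by
      rw [sum_add_distrib, hswap, ← two_nsmul, sum_filter]

theorem three_mul_sum_range_abs_sub (n : ℕ) :
    3 * ∑ i ∈ range n, ∑ j ∈ range n, |(i : ℤ) - j| = (n : ℤ) ^ 3 - n := by
  induction n with
  | zero => simp
  | succ n ih =>
    have hgauss : (∑ i ∈ range n, (i : ℤ)) * 2 = n * (n - 1) := by
      rcases n with _ | m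
      · simp
      · have h := sum_range_id_mul_two (m + 1)
        rw [Nat.add_sub_cancel] at h
        rw [Nat.cast_add_one, add_sub_cancel_right, ← Nat.cast_sum]
        exact_mod_cast h
    have hcol : ∑ i ∈ range n, |(i : ℤ) - n| = ∑ i ∈ range n, ((n : ℤ) - i) :=
      sum_congr rfl fun i hi => by
        rw [abs_sub_comm, abs_of_nonneg (by have := mem_range.mp hi; omega)]
    have hrow : ∑ j ∈ range n, |(n : ℤ) - j| = ∑ j ∈ range n, ((n : ℤ) - j) :=
      sum_congr rfl fun j hj => abs_of_nonneg (by have := mem_range.mp hj; omega)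
    simp only [sum_range_succ, sum_add_distrib, hcol, hrow, sum_sub_distrib, sum_const,
      card_range, nsmul_eq_mul, sub_self, abs_zero, add_zero]
    push_cast
    linear_combination ih - 3 * hgauss

namespace LatinSquare

variable {n : ℕ} (L : LatinSquare n)

theorem toFun_pos (r s : Fin n) : L.toFun r (L.pos r s) = s :=
  Equiv.ofBijective_apply_symm_apply _ (L.row_bij r) s

theorem pos_bijective (s : Fin n) : Function.Bijective (L.pos · s) := by
  refine Finite.injective_iff_bijective.mp fun r₁ r₂ h => (L.col_bij (L.pos r₁ s)).1 ?_
  simp only at h ⊢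
  rw [toFun_pos, h, toFun_pos]

theorem dist_comm (r₁ r₂ : Fin n) : L.dist r₁ r₂ = L.dist r₂ r₁ :=
  sum_congr rfl fun _ _ => abs_sub_comm _ _

@[simp]
theorem dist_self (r : Fin n) : L.dist r r = 0 := by
  simp [dist]

theorem three_mul_sum_dist :
    3 * ∑ p : Fin n × Fin n, L.dist p.1 p.2 = n * ((n : ℤ) ^ 3 - n) := by
  have hsymbol : ∀ s : Fin n, ∑ p : Fin n × Fin n, |((L.pos p.1 s : ℕ) : ℤ) - (L.pos p.2 s : ℕ)|
      = ∑ i ∈ range n, ∑ j ∈ range n, |(i : ℤ) - j| := by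
    intro s
    let σ := Equiv.ofBijective _ (L.pos_bijective s)
    refine (Fintype.sum_equiv (σ.prodCongr σ) _
      (fun p : Fin n × Fin n => |((p.1 : ℕ) : ℤ) - (p.2 : ℕ)|) fun _ => rfl).trans ?_
    rw [Fintype.sum_prod_type, ← Fin.sum_univ_eq_sum_range]
    exact sum_congr rfl fun i _ => Fin.sum_univ_eq_sum_range (fun j => |((i : ℕ) : ℤ) - j|) n
  simp only [dist]
  rw [sum_comm, sum_congr rfl fun s _ => hsymbol s, sum_const, card_univ, Fintype.card_fin,
    nsmul_eq_mul, mul_left_comm, three_mul_sum_range_abs_sub]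

end LatinSquare

theorem LatinSquare.sum_dist (n : ℕ) (L : LatinSquare n) :
    ∑ p ∈ Finset.univ.filter (fun p : Fin n × Fin n => p.1 < p.2),
      L.dist p.1 p.2 = (n : ℤ) ^ 2 * ((n : ℤ) ^ 2 - 1) / 6 := by
  have htotal := L.three_mul_sum_dist
  rw [Finset.sum_prod_eq_two_nsmul_sum_lt _ L.dist_comm L.dist_self, nsmul_eq_mul,
    Nat.cast_ofNat] at htotal
  refine (Int.ediv_eq_of_eq_mul_right (by norm_num) ?_).symm
  linear_combination -htotal
end

section
/- A spatially balanced Latin square (one with imbalance I(L) = 0) of order n can exist only if 3 divides n(n+1); in particular, if n ≡ 1 (mod 3) then I(L) > 0 for every n × n Latin square L. -/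
open Finset

/-!
Every summand `|3·d(r₁,r₂) − n(n+1)|` of `3·I(L)` is congruent to `n(n+1)` modulo 3, so it can
vanish only if `3 ∣ n(n+1)`; for `n ≥ 2` there is at least one pair of rows `r₁ < r₂`. When
`n ≡ 1 (mod 3)`, neither `n` nor `n + 1` is a multiple of the prime 3.
-/

theorem Nat.not_three_dvd_mul_succ_of_mod_three_eq_one {n : ℕ} (h : n % 3 = 1) :
    ¬ (3 : ℤ) ∣ n * (n + 1) := by
  intro hdvd
  have : 3 ∣ n * (n + 1) := by exact_mod_cast hdvd
  rcases Nat.prime_three.dvd_mul.mp this with h' | h' <;> omega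

namespace LatinSquare

variable {n : ℕ}

theorem imbalance3_nonneg (L : LatinSquare n) : 0 ≤ L.imbalance3 :=
  sum_nonneg fun _ _ => abs_nonneg _

theorem three_dvd_of_imbalance3_eq_zero (hn : 2 ≤ n) (L : LatinSquare n)
    (h : L.imbalance3 = 0) : (3 : ℤ) ∣ n * (n + 1) := by
  have hpair : ((⟨0, by omega⟩ : Fin n), (⟨1, by omega⟩ : Fin n)) ∈
      univ.filter (fun p : Fin n × Fin n => p.1 < p.2) := by
    simp [Fin.mk_lt_mk]
  have hterm := (sum_eq_zero_iff_of_nonneg fun _ _ => abs_nonneg _).mp h _ hpair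
  exact ⟨L.dist _ _, by linarith [abs_eq_zero.mp hterm]⟩

end LatinSquare

theorem LatinSquare.sbls_necessary (n : ℕ) (hn : 2 ≤ n) :
    (∀ L : LatinSquare n, L.imbalance3 = 0 → (3 : ℤ) ∣ (n : ℤ) * ((n : ℤ) + 1)) ∧
      (n % 3 = 1 → ∀ L : LatinSquare n, 0 < L.imbalance3) := by
  refine ⟨fun L => L.three_dvd_of_imbalance3_eq_zero hn, fun h3 L => ?_⟩
  exact L.imbalance3_nonneg.lt_of_ne fun h =>
    Nat.not_three_dvd_mul_succ_of_mod_three_eq_one h3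
      (L.three_dvd_of_imbalance3_eq_zero hn h.symm)
end

section
/- For the circulant Latin square L[i][j] = (i + σ⁻¹(j)) mod n built from a permutation σ of Z_n, the distance between rows r₁ and r₂ depends only on the offset δ = r₂ − r₁ (mod n) and equals the shift correlation f_σ(δ) = Σ_{j ∈ Z_n} |σ(j + δ) − σ(j)|, where the absolute value is taken of the integer representatives in {0,...,n−1}. -/
open Finset

variable {n : ℕ}

/-- Shift correlation of a permutation of `ZMod n`. -/
def shiftCorr [NeZero n] (σ : Equiv.Perm (ZMod n)) (δ : ZMod n) : ℤ :=
  ∑ j : ZMod n, |((σ (j + δ)).val : ℤ) - ((σ j).val : ℤ)|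

/-- Column of symbol `s` in row `r` of the circulant Latin square
`L i j = i + σ⁻¹ j`: the inverse of the row bijection `j ↦ r + σ.symm j`. -/
def circPos (σ : Equiv.Perm (ZMod n)) (r s : ZMod n) : ZMod n :=
  (σ.symm.trans (Equiv.addLeft r)).symm s

/-- Row-pair distance of the circulant Latin square `L i j = i + σ⁻¹ j`. -/
def circDist [NeZero n] (σ : Equiv.Perm (ZMod n)) (r₁ r₂ : ZMod n) : ℤ :=
  ∑ s : ZMod n, |((circPos σ r₁ s).val : ℤ) - ((circPos σ r₂ s).val : ℤ)|

theorem circPos_apply (σ : Equiv.Perm (ZMod n)) (r s : ZMod n) : circPos σ r s = σ (s - r) := by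
  simp [circPos, sub_eq_neg_add]

theorem circDist_eq_shiftCorr [NeZero n] (σ : Equiv.Perm (ZMod n)) (r₁ r₂ : ZMod n) :
    circDist σ r₁ r₂ = shiftCorr σ (r₂ - r₁) := by
  -- Substituting `j = s - r₂`, the columns of `s` in rows `r₂` and `r₁` become `σ j` and `σ (j + (r₂ - r₁))`.
  refine Fintype.sum_equiv (Equiv.subRight r₂) _ _ fun s => ?_
  rw [circPos_apply, circPos_apply, Equiv.subRight_apply, sub_add_sub_cancel]
end
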